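/- Let Γ be a finitely generated group, M_B(Γ, N) its GL_N-character variety, and C ⊂ M_B(Γ, N)(ℂ) a constructible subset. Then the intersection over all reductive representations ρ with [ρ] ∈ C of ker ρ equals the intersection over all reductive representations ρ with [ρ] in the Zariski closure of C of ker ρ. -/

import Mathlib

/-- A finite-dimensional matrix representation is reductive (a direct sum of irreducibles)
iff every invariant subspace admits an invariant complement. -/
def RepIsReductive {Γ : Type*} [Group Γ] {N : ℕ}
    (ρ : Γ →* GL (Fin N) ℂ) : Prop :=
  ∀ W : Submodule ℂ (Fin N → ℂ),
    (∀ γ : Γ, W.map (Matrix.toLin' ((ρ γ : Matrix (Fin N) (Fin N) ℂ))) ≤ W) →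
    ∃ W' : Submodule ℂ (Fin N → ℂ), IsCompl W W' ∧
      ∀ γ : Γ, W'.map (Matrix.toLin' ((ρ γ : Matrix (Fin N) (Fin N) ℂ))) ≤ W'

/-- The character of a representation: the collection of its trace functions.  In
characteristic zero two representations define the same point of the `GL_N`-character
variety (GIT quotient) iff they have the same character, so points of the character variety
are identified with characters. -/
noncomputable def repChar {Γ : Type*} [Group Γ] {N : ℕ} (ρ : Γ →* GL (Fin N) ℂ) :
    Γ → ℂ :=
  fun γ => Matrix.trace (ρ γ : Matrix (Fin N) (Fin N) ℂ)

/-- Zariski-closed subsets in character (trace) coordinates: since the coordinate ring of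
the character variety is generated by trace functions, closed subvarieties are cut out by
polynomials in the trace coordinates. -/
def ZClosed {Γ : Type*} (Z : Set (Γ → ℂ)) : Prop :=
  ∃ I : Set (MvPolynomial Γ ℂ), Z = {x | ∀ p ∈ I, MvPolynomial.eval x p = 0}

/-- The points of the `GL_N`-character variety of `Γ` over `ℂ`, realized as characters of
reductive representations. -/
def CharPoints (Γ : Type*) [Group Γ] (N : ℕ) : Set (Γ → ℂ) :=
  {t | ∃ ρ : Γ →* GL (Fin N) ℂ, RepIsReductive ρ ∧ repChar ρ = t}

/-- The Zariski closure in trace coordinates. -/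
def zclosure {Γ : Type*} (T : Set (Γ → ℂ)) : Set (Γ → ℂ) :=
  ⋂₀ {Z : Set (Γ → ℂ) | ZClosed Z ∧ T ⊆ Z}

/-- Constructible subsets in trace coordinates: finite unions of differences of
Zariski-closed subsets. -/
def ZConstructible {Γ : Type*} (C : Set (Γ → ℂ)) : Prop :=
  ∃ s : Finset (Set (Γ → ℂ) × Set (Γ → ℂ)),
    (∀ p ∈ s, ZClosed p.1 ∧ ZClosed p.2) ∧ C = ⋃ p ∈ s, (p.1 \ p.2)


set_option maxHeartbeats 1000000
set_option synthInstance.maxHeartbeats 1000000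

section Aux

open Module LinearMap

variable {Γ : Type*} [Group Γ] {N : ℕ}

/-- The representation as a monoid hom into endomorphisms. -/
noncomputable def endHom (ρ : Γ →* GL (Fin N) ℂ) : Γ →* Module.End ℂ (Fin N → ℂ) where
  toFun γ := Matrix.toLin' ((ρ γ : Matrix (Fin N) (Fin N) ℂ))
  map_one' := by
    simp only [map_one, Units.val_one, Matrix.toLin'_one]
    rfl
  map_mul' a b := by
    simp only [map_mul, Units.val_mul, Matrix.toLin'_mul]
    rfl

lemma trace_endHom (ρ : Γ →* GL (Fin N) ℂ) (δ : Γ) :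
    LinearMap.trace ℂ (Fin N → ℂ) (endHom ρ δ)
      = Matrix.trace ((ρ δ : Matrix (Fin N) (Fin N) ℂ)) := by
  show LinearMap.trace ℂ (Fin N → ℂ) (Matrix.toLin' ((ρ δ : Matrix (Fin N) (Fin N) ℂ))) = _
  rw [LinearMap.trace_eq_matrix_trace ℂ (Pi.basisFun ℂ (Fin N)),
    LinearMap.toMatrix_eq_toMatrix', LinearMap.toMatrix'_toLin']

theorem eq_one_of_trace_eq (ρ : Γ →* GL (Fin N) ℂ) (hred : RepIsReductive ρ) (γ : Γ)
    (htr : ∀ δ : Γ, Matrix.trace ((ρ (γ * δ) : Matrix (Fin N) (Fin N) ℂ))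
      = Matrix.trace ((ρ δ : Matrix (Fin N) (Fin N) ℂ))) : ρ γ = 1 := by
  classical
  set g := endHom ρ with hg
  set S : Subalgebra ℂ (Module.End ℂ (Fin N → ℂ)) := Algebra.adjoin ℂ (Set.range ⇑g) with hS
  -- traces vanish on S * (g γ - 1)
  have htrace : ∀ x ∈ S, LinearMap.trace ℂ (Fin N → ℂ) (x * (g γ - 1)) = 0 := by
    intro x hx
    have hx' : x ∈ Submodule.span ℂ (Set.range ⇑g) := by
      have h := Algebra.adjoin_eq_span (R := ℂ) (s := Set.range ⇑g)
      have h2 : Submonoid.closure (Set.range ⇑g) = MonoidHom.mrange g := by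
        rw [← MonoidHom.coe_mrange, Submonoid.closure_eq]
      rw [h2, MonoidHom.coe_mrange] at h
      have hx2 : x ∈ Subalgebra.toSubmodule (Algebra.adjoin ℂ (Set.range ⇑g)) := hx
      rwa [h] at hx2
    refine Submodule.span_induction ?_ ?_ ?_ ?_ hx'
    · rintro x ⟨δ, rfl⟩
      have h1 : g δ * (g γ - 1) = g δ * g γ - g δ := by rw [mul_sub, mul_one]
      have h2 : LinearMap.trace ℂ (Fin N → ℂ) (g δ * g γ)
          = LinearMap.trace ℂ (Fin N → ℂ) (g (γ * δ)) := by
        rw [LinearMap.trace_mul_comm, ← map_mul]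
      rw [h1, map_sub, h2, trace_endHom, trace_endHom, htr δ, sub_self]
    · simp
    · intro x y _ _ hx hy; rw [add_mul, map_add, hx, hy, add_zero]
    · intro c x _ hx; rw [smul_mul_assoc, map_smul, hx, smul_zero]
  have smul_def : ∀ (s : S) (v : Fin N → ℂ),
      s • v = (s : Module.End ℂ (Fin N → ℂ)) v := fun _ _ => rfl
  -- V is a semisimple S-module
  haveI hsemi : IsSemisimpleModule S (Fin N → ℂ) := by
    refine (isSemisimpleModule_iff S (Fin N → ℂ)).mpr ⟨?_⟩
    intro p
    let W : Submodule ℂ (Fin N → ℂ) :=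
      { carrier := p
        add_mem' := fun ha hb => p.add_mem ha hb
        zero_mem' := p.zero_mem
        smul_mem' := by
          intro c v hv
          have h1 : ((algebraMap ℂ S c) • v) ∈ p := p.smul_mem _ hv
          rw [smul_def] at h1
          have h2 : (((algebraMap ℂ S c) : S) : Module.End ℂ (Fin N → ℂ))
              = algebraMap ℂ (Module.End ℂ (Fin N → ℂ)) c := rfl
          rwa [h2, Module.algebraMap_end_apply] at h1 }
    have hWinv : ∀ δ : Γ, W.map (Matrix.toLin' ((ρ δ : Matrix (Fin N) (Fin N) ℂ))) ≤ W := by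
      intro δ
      rintro x ⟨y, hy, rfl⟩
      have : (⟨g δ, Algebra.subset_adjoin ⟨δ, rfl⟩⟩ : S) • y ∈ p := p.smul_mem _ hy
      exact this
    obtain ⟨W', hcompl, hW'⟩ := hred W hWinv
    let p' : Submodule S (Fin N → ℂ) :=
      { carrier := W'
        add_mem' := fun ha hb => W'.add_mem ha hb
        zero_mem' := W'.zero_mem
        smul_mem' := by
          intro s v hv
          rw [smul_def]
          have hs : (s : Module.End ℂ (Fin N → ℂ)) ∈ Algebra.adjoin ℂ (Set.range ⇑g) := s.2
          refine Algebra.adjoin_induction (p := fun f _ => ∀ w ∈ W', f w ∈ W')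
            ?_ ?_ ?_ ?_ hs v hv
          · rintro x ⟨δ, rfl⟩ w hw
            exact hW' δ ⟨w, hw, rfl⟩
          · intro c w hw
            rw [Module.algebraMap_end_apply]
            exact W'.smul_mem c hw
          · intro x y hx hy ihx ihy w hw
            exact W'.add_mem (ihx w hw) (ihy w hw)
          · intro x y hx hy ihx ihy w hw
            exact ihx _ (ihy w hw) }
    refine ⟨p', ?_⟩
    constructor
    · rw [disjoint_iff]
      ext x
      simp only [Submodule.mem_inf, Submodule.mem_bot]
      constructor
      · rintro ⟨h1, h2⟩
        have hx : x ∈ W ⊓ W' := ⟨h1, h2⟩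
        rwa [disjoint_iff.mp hcompl.disjoint, Submodule.mem_bot] at hx
      · rintro rfl
        exact ⟨p.zero_mem, p'.zero_mem⟩
    · rw [codisjoint_iff]
      ext x
      simp only [Submodule.mem_top, iff_true]
      have hx : x ∈ W ⊔ W' := by
        rw [codisjoint_iff.mp hcompl.codisjoint]; trivial
      obtain ⟨y, hy, z, hz, rfl⟩ := Submodule.mem_sup.mp hx
      exact Submodule.add_mem_sup (show y ∈ p from hy) (show z ∈ p' from hz)
  -- V^N is a semisimple S-module
  haveI hsemiN : IsSemisimpleModule S (Fin N → (Fin N → ℂ)) :=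
    isSemisimpleModule_of_isSemisimpleModule_submodule'
      (p := fun i : Fin N => LinearMap.range (LinearMap.single S (fun _ : Fin N => Fin N → ℂ) i))
      (fun _ => IsSemisimpleModule.range _) (LinearMap.iSup_range_single S _)
  -- the idempotent argument
  have hγS : g γ ∈ S := Algebra.subset_adjoin ⟨γ, rfl⟩
  set A : Module.End ℂ (Fin N → ℂ) := g γ - 1 with hA
  have hAS : A ∈ S := S.sub_mem hγS (one_mem S)
  set b : Fin N → (Fin N → ℂ) := fun i => Pi.basisFun ℂ (Fin N) i with hb
  let U : Submodule S (Fin N → (Fin N → ℂ)) :=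
    { carrier := {w | ∃ x ∈ S, w = fun i => (x * A) (b i)}
      add_mem' := by
        rintro w₁ w₂ ⟨x, hx, rfl⟩ ⟨y, hy, rfl⟩
        exact ⟨x + y, S.add_mem hx hy, by funext i; simp [add_mul]⟩
      zero_mem' := ⟨0, S.zero_mem, by funext i; simp⟩
      smul_mem' := by
        rintro s w ⟨x, hx, rfl⟩
        refine ⟨(s : Module.End ℂ (Fin N → ℂ)) * x, S.mul_mem s.2 hx, ?_⟩
        funext i
        show (s : Module.End ℂ (Fin N → ℂ)) ((x * A) (b i)) = _
        rw [mul_assoc]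
        rfl }
  haveI := (isSemisimpleModule_iff S (Fin N → (Fin N → ℂ))).mp hsemiN
  obtain ⟨Q, hQ⟩ := exists_isCompl U
  have hbmem : b ∈ U ⊔ Q := by
    rw [codisjoint_iff.mp hQ.codisjoint]; trivial
  obtain ⟨u, hu, q, hq, huq⟩ := Submodule.mem_sup.mp hbmem
  obtain ⟨t, htS, htu⟩ := hu
  let s : S := ⟨A, hAS⟩
  have hAA : A = A * t * A := by
    apply (Pi.basisFun ℂ (Fin N)).ext
    intro i
    have hsu : s • u = fun i => (A * t * A) (b i) := by
      rw [htu]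
      funext i
      show (A : Module.End ℂ (Fin N → ℂ)) ((t * A) (b i)) = (A * t * A) (b i)
      rw [mul_assoc]
      rfl
    have hsq0 : s • q = 0 := by
      have hqU : s • q ∈ U := by
        refine ⟨1 - A * t, S.sub_mem (one_mem S) (S.mul_mem hAS htS), ?_⟩
        funext i
        show (A : Module.End ℂ (Fin N → ℂ)) (q i) = ((1 - A * t) * A) (b i)
        have hqi : q i = b i - u i := eq_sub_of_add_eq' (congrFun huq i)
        have hui : u i = (t * A) (b i) := congrFun htu i
        rw [hqi, map_sub, hui, sub_mul, one_mul, LinearMap.sub_apply]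
        congr 1
      have hin : s • q ∈ U ⊓ Q := ⟨hqU, Q.smul_mem s hq⟩
      rwa [disjoint_iff.mp hQ.disjoint, Submodule.mem_bot] at hin
    have h1 : s • b = s • u + s • q := by rw [← smul_add, huq]
    rw [hsq0, add_zero, hsu] at h1
    have h2 := congrFun h1 i
    exact h2
  have hEidem : (t * A) * (t * A) = t * A := by
    have h3 : (t * A) * (t * A) = t * (A * t * A) := by
      rw [mul_assoc, mul_assoc A t A]
    rw [h3, ← hAA]
  have htr0 : LinearMap.trace ℂ (Fin N → ℂ) (t * A) = 0 := htrace t htS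
  have hE0 : t * A = 0 := by
    set E := t * A with hEdef
    have hproj : LinearMap.IsProj (LinearMap.range E) E := by
      refine ⟨fun x => LinearMap.mem_range_self E x, ?_⟩
      rintro x ⟨y, rfl⟩
      show E (E y) = E y
      rw [← Module.End.mul_apply, hEidem]
    have htr2 := hproj.trace
    rw [htr0] at htr2
    have hrk : Module.finrank ℂ (LinearMap.range E) = 0 := by exact_mod_cast htr2.symm
    have hbot : LinearMap.range E = ⊥ := Submodule.finrank_eq_zero.mp hrk
    exact LinearMap.range_eq_bot.mp hbot
  have hA0 : A = 0 := by
    rw [hAA, mul_assoc, hE0, mul_zero]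
  have hg1 : g γ = 1 := by
    have := hA ▸ hA0
    exact sub_eq_zero.mp this
  have hm : (ρ γ : Matrix (Fin N) (Fin N) ℂ) = 1 := by
    apply Matrix.toLin'.injective
    show Matrix.toLin' ((ρ γ : Matrix (Fin N) (Fin N) ℂ)) = Matrix.toLin' 1
    rw [Matrix.toLin'_one]
    exact hg1
  exact Units.ext hm

end Aux

/-- For a constructible subset `C` of the `GL_N`-character variety of a finitely generated
group `Γ` over `ℂ`, the intersection of the kernels of all reductive representations with
class in `C` equals the intersection over all reductive representations with class in the
Zariski closure of `C`. -/
theorem stmt7 {Γ : Type*} [Group Γ] (hΓ : Group.FG Γ) {N : ℕ}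
    (C : Set (Γ → ℂ)) (hCsub : C ⊆ CharPoints Γ N)
    (hCcon : ∃ C' : Set (Γ → ℂ), ZConstructible C' ∧ C = C' ∩ CharPoints Γ N) :
    (⨅ ρ ∈ {ρ : Γ →* GL (Fin N) ℂ | RepIsReductive ρ ∧ repChar ρ ∈ C},
        MonoidHom.ker ρ) =
      ⨅ ρ ∈ {ρ : Γ →* GL (Fin N) ℂ | RepIsReductive ρ ∧ repChar ρ ∈ zclosure C},
        MonoidHom.ker ρ := by
  have hCclo : C ⊆ zclosure C := fun t ht => Set.mem_sInter.mpr fun Z hZ => hZ.2 ht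
  apply le_antisymm
  · -- the hard direction
    refine le_iInf₂ fun ρ hρ => ?_
    intro γ hγ
    rw [Subgroup.mem_iInf] at hγ
    have hker : ∀ ρ' : Γ →* GL (Fin N) ℂ, RepIsReductive ρ' → repChar ρ' ∈ C → ρ' γ = 1 := by
      intro ρ' h1 h2
      have := hγ ρ'
      rw [Subgroup.mem_iInf] at this
      exact this ⟨h1, h2⟩
    -- the Zariski-closed condition cut out by the trace relations of γ
    set Z : Set (Γ → ℂ) := {x | ∀ δ : Γ, x (γ * δ) = x δ} with hZdef
    have hZ : ZClosed Z := by
      refine ⟨(fun δ : Γ => MvPolynomial.X (γ * δ) - MvPolynomial.X δ) '' Set.univ, ?_⟩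
      ext x
      simp [sub_eq_zero, hZdef]
    have hCZ : C ⊆ Z := by
      intro x hx
      obtain ⟨ρ', hρ'red, rfl⟩ := hCsub hx
      intro δ
      show Matrix.trace ((ρ' (γ * δ) : Matrix (Fin N) (Fin N) ℂ)) = _
      rw [map_mul, hker ρ' hρ'red hx, one_mul]
      rfl
    have hcloZ : zclosure C ⊆ Z := Set.sInter_subset_of_mem ⟨hZ, hCZ⟩
    have htr : ∀ δ : Γ, Matrix.trace ((ρ (γ * δ) : Matrix (Fin N) (Fin N) ℂ))
        = Matrix.trace ((ρ δ : Matrix (Fin N) (Fin N) ℂ)) := fun δ => hcloZ hρ.2 δ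
    exact eq_one_of_trace_eq ρ hρ.1 γ htr
  · -- the easy direction
    refine le_iInf₂ fun ρ hρ => ?_
    exact iInf₂_le ρ ⟨hρ.1, hCclo hρ.2⟩
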